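/- The path metric construction preserves tensor products: for sets X, Y with reflexive symmetric relations ~_X, ~_Y, define the tensor relation on X × Y by (x,y) ~ (x',y') iff (x = x' and y ~_Y y') or (y = y' and x ~_X x'). Then the path metric of this tensor relation equals the sum metric d_X(x,x') + d_Y(y,y'), where d_X, d_Y are the path metrics of ~_X, ~_Y. -/

import Mathlib

open scoped ENNReal

/-- The path (pseudo-)metric induced by a relation. -/
noncomputable def pathDist {X : Type*} (r : X → X → Prop) (x y : X) : ℝ≥0∞ :=
  ⨅ (k : ℕ) (c : Fin (k + 1) → X) (_ : c 0 = x) (_ : c (Fin.last k) = y)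
    (_ : ∀ i : Fin k, r (c i.castSucc) (c i.succ)), (k : ℝ≥0∞)

/-! For the path metric `d_T` of the tensor relation, the upper bound `d_T ≤ d_X + d_Y` follows
from the triangle inequality through the corner `(q.1, p.2)`, since the two axis-parallel
embeddings `X → X × Y` and `Y → X × Y` are relation homomorphisms. For the lower bound,
`a ↦ d_X(a.1, q.1) + d_Y(a.2, q.2)` vanishes at `q` and grows by at most one along each step of
the tensor relation, and `d_T(·, q)` is the largest function with these two properties. -/

section PathDist

variable {X : Type*} {r : X → X → Prop}

theorem pathDist_le_of_chain {x y : X} (k : ℕ) (c : Fin (k + 1) → X) (h0 : c 0 = x)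
    (hl : c (Fin.last k) = y) (hs : ∀ i : Fin k, r (c i.castSucc) (c i.succ)) :
    pathDist r x y ≤ k :=
  iInf_le_of_le k <| iInf_le_of_le c <| iInf_le_of_le h0 <| iInf_le_of_le hl <| iInf_le _ hs

theorem pathDist_self (x : X) : pathDist r x x = 0 :=
  nonpos_iff_eq_zero.mp <| by
    simpa using pathDist_le_of_chain (r := r) 0 (fun _ => x) rfl rfl finZeroElim

theorem pathDist_le_one_add {a b c : X} (h : r a b) : pathDist r a c ≤ 1 + pathDist r b c := by
  simp only [pathDist, ENNReal.add_iInf]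
  refine le_iInf fun k => le_iInf fun ch => le_iInf fun h0 => le_iInf fun hl => le_iInf fun hs => ?_
  calc pathDist r a c ≤ (k + 1 : ℕ) := by
        refine pathDist_le_of_chain (k + 1) (Fin.cons a ch) rfl (by simpa using hl) fun i => ?_
        induction i using Fin.cases with
        | zero => simpa [h0] using h
        | succ j => simpa [← Fin.succ_castSucc] using hs j
    _ = 1 + k := by push_cast; ring

theorem le_add_of_chain {f : X → ℝ≥0∞} (hstep : ∀ a b, r a b → f a ≤ 1 + f b) :
    ∀ {k : ℕ} (c : Fin (k + 1) → X), (∀ i : Fin k, r (c i.castSucc) (c i.succ)) →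
      f (c 0) ≤ k + f (c (Fin.last k))
  | 0, c, _ => by simp
  | k + 1, c, hs => by
    have htail := le_add_of_chain hstep (Fin.tail c) fun i => by
      simpa [Fin.tail, ← Fin.succ_castSucc] using hs i.succ
    calc f (c 0) ≤ 1 + f (c 1) := hstep _ _ (hs 0)
      _ ≤ 1 + (k + f (c (Fin.last (k + 1)))) := by simpa [Fin.tail] using htail
      _ = (k + 1 : ℕ) + f (c (Fin.last (k + 1))) := by push_cast; ring

theorem le_pathDist_of_le_one_add {f : X → ℝ≥0∞} {x y : X} (hy : f y = 0)
    (hstep : ∀ a b, r a b → f a ≤ 1 + f b) : f x ≤ pathDist r x y := by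
  refine le_iInf fun k => le_iInf fun c => le_iInf fun h0 => le_iInf fun hl => le_iInf fun hs => ?_
  subst h0 hl
  simpa [hy] using le_add_of_chain hstep c hs

theorem pathDist_triangle (a b c : X) : pathDist r a c ≤ pathDist r a b + pathDist r b c := by
  refine tsub_le_iff_right.mp <| le_pathDist_of_le_one_add (f := (pathDist r · c - pathDist r b c))
    (tsub_self _) fun a a' h => ?_
  calc pathDist r a c - pathDist r b c ≤ 1 + pathDist r a' c - pathDist r b c :=
        tsub_le_tsub_right (pathDist_le_one_add h) _
    _ ≤ 1 + (pathDist r a' c - pathDist r b c) := add_tsub_le_assoc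

theorem pathDist_map_le {Y : Type*} {s : Y → Y → Prop} (f : X → Y)
    (hf : ∀ a b, r a b → s (f a) (f b)) (x y : X) : pathDist s (f x) (f y) ≤ pathDist r x y :=
  le_pathDist_of_le_one_add (f := fun a => pathDist s (f a) (f y)) (pathDist_self _)
    fun _ _ h => pathDist_le_one_add (hf _ _ h)

end PathDist

theorem pathDist_tensor_general {X Y : Type*}
    (rX : X → X → Prop)
    (rY : Y → Y → Prop)
    (p q : X × Y) :
    pathDist (fun a b => (a.1 = b.1 ∧ rY a.2 b.2) ∨ (a.2 = b.2 ∧ rX a.1 b.1)) p q =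
      pathDist rX p.1 q.1 + pathDist rY p.2 q.2 := by
  refine le_antisymm ?_ <| le_pathDist_of_le_one_add
    (f := fun a : X × Y => pathDist rX a.1 q.1 + pathDist rY a.2 q.2) ?_ ?_
  · exact (pathDist_triangle p (q.1, p.2) q).trans <| add_le_add
      (pathDist_map_le (r := rX) (·, p.2) (fun _ _ h => Or.inr ⟨rfl, h⟩) p.1 q.1)
      (pathDist_map_le (r := rY) (q.1, ·) (fun _ _ h => Or.inl ⟨rfl, h⟩) p.2 q.2)
  · simp only [pathDist_self, add_zero]
  · rintro ⟨x, y⟩ ⟨x', y'⟩ (⟨rfl, hy⟩ | ⟨rfl, hx⟩)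
    · calc _ ≤ pathDist rX x q.1 + (1 + pathDist rY y' q.2) := by
            gcongr; exact pathDist_le_one_add hy
        _ = _ := by ring
    · calc _ ≤ 1 + pathDist rX x' q.1 + pathDist rY y q.2 := by
            gcongr; exact pathDist_le_one_add hx
        _ = _ := by ring

/-- The path metric construction preserves tensor products: the path metric of
the tensor relation on `X × Y` is the sum of the path metrics. -/
theorem pathDist_tensor {X Y : Type*}
    (rX : X → X → Prop) (hreflX : Reflexive rX) (hsymmX : Symmetric rX)
    (rY : Y → Y → Prop) (hreflY : Reflexive rY) (hsymmY : Symmetric rY)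
    (p q : X × Y) :
    pathDist (fun a b => (a.1 = b.1 ∧ rY a.2 b.2) ∨ (a.2 = b.2 ∧ rX a.1 b.1)) p q =
      pathDist rX p.1 q.1 + pathDist rY p.2 q.2 :=
  pathDist_tensor_general rX rY p q
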